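/- Let s ∈ ℂ with Re(s) > 1, and let r ∈ ℂ be either real or purely imaginary with |r| ≤ 1/2. Then 2∫₀^∞ cos(ur) g_s(u) du = (2^{s−1} √π / Γ(s)) · Γ((s − 1/2 − ir)/2) · Γ((s − 1/2 + ir)/2), where g_s(u) := 2^{1/2} √π (Γ(s − 1/2)/Γ(s)) cosh(u)^{−(s−1/2)}. In other words, g_s has Selberg/Harish-Chandra transform h_s(r) = (2^{s−1}√π/Γ(s)) Γ((s−1/2−ir)/2) Γ((s−1/2+ir)/2). -/

import Mathlib

open MeasureTheory Set

noncomputable def gTest (s : ℂ) (u : ℝ) : ℂ :=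
  (2 : ℂ) ^ ((1 / 2 : ℂ)) * (Real.sqrt Real.pi : ℂ) *
    (Complex.Gamma (s - 1 / 2) / Complex.Gamma s) *
      ((Real.cosh u : ℂ) ^ (-(s - 1 / 2)))

/-!
The substitution `u = artanh (2t - 1)` turns `cosh (u (p - q)) cosh(u)^(-(p + q)) du` on `(0, ∞)`
into `2^(p+q-2) (t^(p-1) (1-t)^(q-1) + (1-t)^(p-1) t^(q-1)) dt` on `(1/2, 1)`; folding `[0, 1]`
at its midpoint, this integrates to `2^(p+q-2) B(p, q)`. For `p, q = (s - 1/2 ± i r)/2`, whose real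
parts are positive since `|Im r| ≤ 1/2 < Re s - 1/2`, the factor `Γ(p + q) = Γ(s - 1/2)` of
`B(p, q) = Γ(p) Γ(q) / Γ(p + q)` cancels against the normalisation of `g_s`.
-/

namespace Real

lemma artanh_eq_half_log_sub_log {x : ℝ} (hx : x ∈ Ioo (-1) 1) :
    artanh x = (log (1 + x) - log (1 - x)) / 2 := by
  rw [artanh_eq_half_log (Ioo_subset_Icc_self hx), log_div (by grind) (by grind)]
  ring

lemma hasDerivAt_artanh {x : ℝ} (hx : x ∈ Ioo (-1) 1) :
    HasDerivAt artanh (1 - x ^ 2)⁻¹ x := by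
  have h₁ : 1 + x ≠ 0 := by grind
  have h₂ : 1 - x ≠ 0 := by grind
  have h : 1 - x ^ 2 ≠ 0 := by grind
  have hlog := ((((hasDerivAt_id x).const_add 1).log h₁).sub
    (((hasDerivAt_id x).const_sub 1).log h₂)).div_const 2
  refine (hlog.congr_of_eventuallyEq ?_).congr_deriv ?_
  · filter_upwards [Ioo_mem_nhds hx.1 hx.2] with y hy using artanh_eq_half_log_sub_log hy
  · simp only [id]
    field_simp
    ring

lemma artanh_image_Ioo_zero_one : artanh '' Ioo 0 1 = Ioi 0 := by
  refine Subset.antisymm (image_subset_iff.2 fun x hx => artanh_pos hx) fun y hy => ?_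
  refine ⟨tanh y, ⟨?_, tanh_lt_one y⟩, artanh_tanh y⟩
  rw [tanh_eq_sinh_div_cosh]
  exact div_pos (sinh_pos_iff.2 hy) (cosh_pos y)

lemma log_cosh_artanh {x : ℝ} (hx : x ∈ Ioo (-1) 1) :
    log (cosh (artanh x)) = -(log (1 + x) + log (1 - x)) / 2 := by
  have h₁ : 0 < 1 + x := by grind
  have h₂ : 0 < 1 - x := by grind
  rw [cosh_artanh hx, one_div, log_inv, show 1 - x ^ 2 = (1 + x) * (1 - x) by ring,
    log_sqrt (by positivity), log_mul h₁.ne' h₂.ne']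
  ring

end Real

namespace intervalIntegral

variable {E : Type*} [NormedAddCommGroup E] [NormedSpace ℝ E]

theorem integral_add_comp_reflect_midpoint {f : ℝ → E} {a b : ℝ}
    (hf : IntervalIntegrable f volume a b) :
    ∫ x in (a + b) / 2..b, (f x + f (a + b - x)) = ∫ x in a..b, f x := by
  have hmid : (a + b) / 2 ∈ uIcc a b := mem_uIcc.2 <| (le_total a b).imp
    (fun h => ⟨by linarith, by linarith⟩) fun h => ⟨by linarith, by linarith⟩
  have hleft := hf.mono_set (uIcc_subset_uIcc left_mem_uIcc hmid)
  have hright := hf.mono_set (uIcc_subset_uIcc hmid right_mem_uIcc)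
  have hreflect : IntervalIntegrable (fun x => f (a + b - x)) volume ((a + b) / 2) b := by
    have h := hf.comp_sub_left (a + b)
    rw [add_sub_cancel_left, add_sub_cancel_right] at h
    exact h.symm.mono_set (uIcc_subset_uIcc hmid right_mem_uIcc)
  rw [integral_add hright hreflect, integral_comp_sub_left, add_sub_cancel_right,
    show a + b - (a + b) / 2 = (a + b) / 2 by ring, add_comm,
    integral_add_adjacent_intervals hleft hright]

end intervalIntegral

namespace Complex

lemma ofReal_cpow_eq_exp_mul_log {x : ℝ} (hx : 0 < x) (w : ℂ) :
    (x : ℂ) ^ w = exp (w * Real.log x) := by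
  rw [cpow_def_of_ne_zero (ofReal_ne_zero.2 hx.ne'), ← ofReal_log hx.le, mul_comm]

open Real in
lemma inv_one_sub_sq_mul_cosh_mul_artanh {x : ℝ} (hx : x ∈ Ioo (-1) 1) (p q : ℂ) :
    ((1 - x ^ 2)⁻¹ : ℝ) *
        (cosh (artanh x * (p - q)) * (Real.cosh (artanh x) : ℂ) ^ (-(p + q)))
      = (((1 + x : ℝ) : ℂ) ^ (p - 1) * ((1 - x : ℝ) : ℂ) ^ (q - 1)
          + ((1 + x : ℝ) : ℂ) ^ (q - 1) * ((1 - x : ℝ) : ℂ) ^ (p - 1)) / 2 := by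
  have h₁ : 0 < 1 + x := by grind
  have h₂ : 0 < 1 - x := by grind
  have hjac : ((1 - x ^ 2)⁻¹ : ℝ) = Real.exp (-(Real.log (1 + x) + Real.log (1 - x))) := by
    rw [Real.exp_neg, ← Real.log_mul h₁.ne' h₂.ne', Real.exp_log (by positivity)]
    ring
  rw [ofReal_cpow_eq_exp_mul_log (Real.cosh_pos _), log_cosh_artanh hx,
    artanh_eq_half_log_sub_log hx, hjac, ofReal_cpow_eq_exp_mul_log h₁,
    ofReal_cpow_eq_exp_mul_log h₂, ofReal_cpow_eq_exp_mul_log h₁,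
    ofReal_cpow_eq_exp_mul_log h₂, ofReal_exp, cosh]
  push_cast
  set L := (Real.log (1 + x) : ℂ)
  set M := (Real.log (1 - x) : ℂ)
  have hterm : ∀ a b e : ℂ, a + b = p + q → e = (L - M) / 2 * (a - b) →
      exp (-(L + M)) * exp e * exp (-(p + q) * (-(L + M) / 2))
        = exp ((a - 1) * L) * exp ((b - 1) * M) := by
    intro a b e hab he
    simp only [← exp_add]
    congr 1
    linear_combination he - (L + M) / 2 * hab
  linear_combination (hterm p q _ rfl rfl
    + hterm q p (-((L - M) / 2 * (p - q))) (add_comm q p) (by ring)) / 2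

open Real in
lemma abs_deriv_smul_cosh_mul_artanh_two_mul_sub_one {t : ℝ} (ht : t ∈ Ioo 0 1) (p q : ℂ) :
    |(1 - (2 * t - 1) ^ 2)⁻¹ * 2| • (cosh (artanh (2 * t - 1) * (p - q)) *
        (Real.cosh (artanh (2 * t - 1)) : ℂ) ^ (-(p + q)))
      = 2 ^ (p + q - 2) * ((t : ℂ) ^ (p - 1) * (1 - (t : ℂ)) ^ (q - 1)
          + ((1 - t : ℝ) : ℂ) ^ (p - 1) * (1 - ((1 - t : ℝ) : ℂ)) ^ (q - 1)) := by
  have hx : 2 * t - 1 ∈ Ioo (-1) 1 := ⟨by grind, by grind⟩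
  have hpos : 0 < (1 - (2 * t - 1) ^ 2)⁻¹ * 2 := by
    have : 0 < 1 - (2 * t - 1) ^ 2 := by nlinarith [ht.1, ht.2]
    positivity
  have h₁ : ((1 + (2 * t - 1) : ℝ) : ℂ) = ((2 : ℝ) : ℂ) * t := by push_cast; ring
  have h₂ : ((1 - (2 * t - 1) : ℝ) : ℂ) = ((2 : ℝ) : ℂ) * ((1 - t : ℝ) : ℂ) := by
    push_cast; ring
  have htwo : (0 : ℝ) ≤ 2 := zero_le_two
  have hpow : (2 : ℂ) ^ (p - 1) * 2 ^ (q - 1) = 2 ^ (p + q - 2) := by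
    rw [← cpow_add _ _ two_ne_zero, show p - 1 + (q - 1) = p + q - 2 by ring]
  rw [abs_of_pos hpos, real_smul, ofReal_mul, mul_right_comm,
    inv_one_sub_sq_mul_cosh_mul_artanh hx, h₁, h₂,
    mul_cpow_ofReal_nonneg htwo ht.1.le, mul_cpow_ofReal_nonneg htwo ht.1.le,
    mul_cpow_ofReal_nonneg htwo (sub_nonneg.2 ht.2.le),
    mul_cpow_ofReal_nonneg htwo (sub_nonneg.2 ht.2.le),
    ← hpow]
  push_cast
  rw [sub_sub_cancel]
  ring

open Real in
theorem integral_Ioi_cosh_mul_mul_cosh_cpow_neg {p q : ℂ} (hp : 0 < p.re) (hq : 0 < q.re) :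
    ∫ u in Ioi (0 : ℝ), cosh (u * (p - q)) * (Real.cosh u : ℂ) ^ (-(p + q))
      = 2 ^ (p + q - 2) * betaIntegral p q := by
  have hmaps : (fun t : ℝ => 2 * t - 1) '' Ioo (1 / 2) 1 = Ioo 0 1 := by
    simp only [sub_eq_add_neg, image_affine_Ioo (two_pos (α := ℝ))]
    norm_num
  have himage : (fun t : ℝ => artanh (2 * t - 1)) '' Ioo (1 / 2) 1 = Ioi 0 := by
    rw [← artanh_image_Ioo_zero_one, ← hmaps, image_image]
  have hderiv : ∀ t ∈ Ioo (1 / 2 : ℝ) 1, HasDerivWithinAt (fun t : ℝ => artanh (2 * t - 1))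
      ((1 - (2 * t - 1) ^ 2)⁻¹ * 2) (Ioo (1 / 2) 1) t := by
    intro t ht
    have hx : 2 * t - 1 ∈ Ioo (-1) 1 := ⟨by grind, by grind⟩
    exact ((hasDerivAt_artanh hx).comp t
      (((hasDerivAt_id t).const_mul 2).sub_const 1 |>.congr_deriv (mul_one 2))).hasDerivWithinAt
  have hinj : InjOn (fun t : ℝ => artanh (2 * t - 1)) (Ioo (1 / 2) 1) :=
    artanh_injOn.comp (fun a _ b _ h => by simpa using h)
      fun t ht => ⟨by grind, by grind⟩
  rw [← himage, integral_image_eq_integral_abs_deriv_smul measurableSet_Ioo hderiv hinj,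
    setIntegral_congr_fun measurableSet_Ioo fun t ht =>
      abs_deriv_smul_cosh_mul_artanh_two_mul_sub_one ⟨by grind, ht.2⟩ p q,
    integral_const_mul, ← integral_Ioc_eq_integral_Ioo,
    ← intervalIntegral.integral_of_le (by norm_num)]
  have hfold := intervalIntegral.integral_add_comp_reflect_midpoint (betaIntegral_convergent hp hq)
  simp only [zero_add] at hfold
  rw [betaIntegral, ← hfold]

end Complex

open Complex in
/-- for `Re(s) > 1` and `r` real, or purely imaginary with `|r| ≤ 1/2`,
the Selberg/Harish-Chandra transform of `g_s` is
`h_s(r) = (2^{s-1}√π/Γ(s)) Γ((s-1/2-ir)/2) Γ((s-1/2+ir)/2)`. -/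
theorem statement3 (s : ℂ) (hs : 1 < s.re) (r : ℂ)
    (hr : r.im = 0 ∨ (r.re = 0 ∧ ‖r‖ ≤ 1 / 2)) :
    2 * ∫ u in Set.Ioi (0 : ℝ), Complex.cos (u * r) * gTest s u
      = (2 : ℂ) ^ (s - 1) * (Real.sqrt Real.pi : ℂ) / Complex.Gamma s *
          (Complex.Gamma ((s - 1 / 2 - Complex.I * r) / 2) *
            Complex.Gamma ((s - 1 / 2 + Complex.I * r) / 2)) := by
  set p := (s - 1 / 2 + I * r) / 2
  set q := (s - 1 / 2 - I * r) / 2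
  have him : |r.im| ≤ 1 / 2 := by
    rcases hr with h | ⟨-, h⟩
    · simp [h]
    · exact (abs_im_le_norm r).trans h
  have hre : p.re = (s.re - 1 / 2 - r.im) / 2 ∧ q.re = (s.re - 1 / 2 + r.im) / 2 := by
    constructor <;>
    · simp only [p, q, div_ofNat_re, add_re, sub_re, I_mul_re, one_re]
      ring
  have hp : 0 < p.re := by linarith [hre.1, (abs_le.1 him).2]
  have hq : 0 < q.re := by linarith [hre.2, (abs_le.1 him).1]
  have hpq : p + q = s - 1 / 2 := by ring
  have hkernel : ∀ u : ℝ, cos (u * r) * gTest s u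
      = 2 ^ (1 / 2 : ℂ) * (Real.sqrt Real.pi : ℂ) * (Gamma (p + q) / Gamma s) *
          (cosh (u * (p - q)) * (Real.cosh u : ℂ) ^ (-(p + q))) := by
    intro u
    rw [gTest, hpq, ← cosh_mul_I, show p - q = r * I by ring]
    ring_nf
  have hβ := Gamma_mul_Gamma_eq_betaIntegral hp hq
  have hpow : 2 * (2 ^ (1 / 2 : ℂ) * 2 ^ (p + q - 2)) = (2 : ℂ) ^ (s - 1) := by
    rw [← cpow_add _ _ two_ne_zero, hpq, show 1 / 2 + (s - 1 / 2 - 2) = s - 1 - 1 by ring,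
      cpow_sub _ _ two_ne_zero, cpow_one, mul_div_cancel₀ _ two_ne_zero]
  rw [setIntegral_congr_fun measurableSet_Ioi fun u _ => hkernel u, integral_const_mul,
    integral_Ioi_cosh_mul_mul_cosh_cpow_neg hp hq, ← hpow, mul_comm (Gamma q), hβ]
  ring
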